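/- arXiv:1506.06218 — 4 statements merged into one kernel-verified Lean document; each statement's English description precedes it below -/
import Mathlib

section
/- Let X be a real normed space and let x, y be nonzero vectors in X. Then x + y satisfies the reverse triangle-type inequalities: ‖x‖ + ‖y‖ + (‖x/‖x‖ + y/‖y‖‖ − 2)·max{‖x‖, ‖y‖} ≤ ‖x + y‖ ≤ ‖x‖ + ‖y‖ + (‖x/‖x‖ + y/‖y‖‖ − 2)·min{‖x‖, ‖y‖}. -/
lemma stmt_0_aux {X : Type*} [NormedAddCommGroup X] [NormedSpace ℝ X]
    (x y : X) (hx : x ≠ 0) (hy : y ≠ 0) (h : ‖x‖ ≤ ‖y‖) :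
    ‖x‖ + ‖y‖ + (‖‖x‖⁻¹ • x + ‖y‖⁻¹ • y‖ - 2) * ‖y‖ ≤ ‖x + y‖ ∧
    ‖x + y‖ ≤ ‖x‖ + ‖y‖ + (‖‖x‖⁻¹ • x + ‖y‖⁻¹ • y‖ - 2) * ‖x‖ := by
  have ha : (0:ℝ) < ‖x‖ := norm_pos_iff.mpr hx
  have hb : (0:ℝ) < ‖y‖ := norm_pos_iff.mpr hy
  set u : X := ‖x‖⁻¹ • x + ‖y‖⁻¹ • y with hu
  set N : ℝ := ‖u‖ with hN
  have e1 : ‖y‖ • u = (‖y‖ * ‖x‖⁻¹) • x + y := by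
    rw [hu, smul_add, smul_smul, smul_smul, mul_inv_cancel₀ hb.ne', one_smul]
  have e2 : ‖x‖ • u = x + (‖x‖ * ‖y‖⁻¹) • y := by
    rw [hu, smul_add, smul_smul, smul_smul, mul_inv_cancel₀ ha.ne', one_smul]
  have hba : (0:ℝ) ≤ ‖y‖ * ‖x‖⁻¹ - 1 := by
    rw [sub_nonneg, ← div_eq_mul_inv, le_div_iff₀ ha, one_mul]; exact h
  have hab : (0:ℝ) ≤ 1 - ‖x‖ * ‖y‖⁻¹ := by
    rw [sub_nonneg, ← div_eq_mul_inv, div_le_iff₀ hb, one_mul]; exact h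
  constructor
  · -- lower bound: x + y = ‖y‖ • u - (‖y‖*‖x‖⁻¹ - 1) • x
    have key : ‖y‖ • u - (‖y‖ * ‖x‖⁻¹ - 1) • x = x + y := by
      rw [e1, sub_smul, one_smul]; abel
    have hle : ‖‖y‖ • u‖ - ‖(‖y‖ * ‖x‖⁻¹ - 1) • x‖ ≤ ‖x + y‖ := by
      rw [← key]; exact norm_sub_norm_le _ _
    have n1 : ‖‖y‖ • u‖ = ‖y‖ * N := by
      rw [norm_smul, Real.norm_of_nonneg hb.le]
    have n2 : ‖(‖y‖ * ‖x‖⁻¹ - 1) • x‖ = ‖y‖ - ‖x‖ := by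
      rw [norm_smul, Real.norm_of_nonneg hba, sub_mul, one_mul, mul_assoc,
        inv_mul_cancel₀ ha.ne', mul_one]
    rw [n1, n2] at hle
    nlinarith [hle]
  · -- upper bound: x + y = ‖x‖ • u + (1 - ‖x‖*‖y‖⁻¹) • y
    have key : ‖x‖ • u + (1 - ‖x‖ * ‖y‖⁻¹) • y = x + y := by
      rw [e2, sub_smul, one_smul]; abel
    have hle : ‖x + y‖ ≤ ‖‖x‖ • u‖ + ‖(1 - ‖x‖ * ‖y‖⁻¹) • y‖ := by
      rw [← key]; exact norm_add_le _ _
    have n1 : ‖‖x‖ • u‖ = ‖x‖ * N := by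
      rw [norm_smul, Real.norm_of_nonneg ha.le]
    have n2 : ‖(1 - ‖x‖ * ‖y‖⁻¹) • y‖ = ‖y‖ - ‖x‖ := by
      rw [norm_smul, Real.norm_of_nonneg hab, sub_mul, one_mul, mul_assoc,
        inv_mul_cancel₀ hb.ne', mul_one]
    rw [n1, n2] at hle
    nlinarith [hle]

/-- reverse triangle-type inequalities for nonzero vectors in a real
normed space. -/
theorem stmt_0 {X : Type*} [NormedAddCommGroup X] [NormedSpace ℝ X]
    (x y : X) (hx : x ≠ 0) (hy : y ≠ 0) :
    ‖x‖ + ‖y‖ + (‖‖x‖⁻¹ • x + ‖y‖⁻¹ • y‖ - 2) * max ‖x‖ ‖y‖ ≤ ‖x + y‖ ∧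
    ‖x + y‖ ≤ ‖x‖ + ‖y‖ + (‖‖x‖⁻¹ • x + ‖y‖⁻¹ • y‖ - 2) * min ‖x‖ ‖y‖ := by
  rcases le_total ‖x‖ ‖y‖ with h | h
  · rw [max_eq_right h, min_eq_left h]
    exact stmt_0_aux x y hx hy h
  · rw [max_eq_left h, min_eq_right h]
    have := stmt_0_aux y x hy hx h
    rw [add_comm y x, add_comm (‖y‖⁻¹ • y) (‖x‖⁻¹ • x), add_comm ‖y‖ ‖x‖] at this
    exact this
end

section
/- Let X be a real normed space, ε ∈ [0, 1/16), and x, y ∈ X. If x ≈ε_W y, then x ⊥(16ε)_W y, i.e., | ‖ ‖y‖·x + ‖x‖·y ‖² − 2‖x‖²‖y‖² | ≤ 32ε‖x‖²‖y‖². -/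
/-- Approximate bisectrix-orthogonality `x ≈ε_W y`. -/
def approxBisectrixOrth {X : Type*} [NormedAddCommGroup X] [NormedSpace ℝ X]
    (ε : ℝ) (x y : X) : Prop :=
  Real.sqrt 2 * ((1 - ε) / (1 + ε)) * (‖x‖ * ‖y‖) ≤ ‖(‖y‖ : ℝ) • x + (‖x‖ : ℝ) • y‖ ∧
  ‖(‖y‖ : ℝ) • x + (‖x‖ : ℝ) • y‖ ≤ Real.sqrt 2 * ((1 + ε) / (1 - ε)) * (‖x‖ * ‖y‖)

/-- for `ε ∈ [0, 1/16)`, `≈ε_W` implies `⊥(16ε)_W`. -/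
theorem stmt_6 {X : Type*} [NormedAddCommGroup X] [NormedSpace ℝ X]
    (ε : ℝ) (hε : ε ∈ Set.Ico (0 : ℝ) (1 / 16)) (x y : X)
    (h : approxBisectrixOrth ε x y) :
    |‖(‖y‖ : ℝ) • x + (‖x‖ : ℝ) • y‖ ^ 2 - 2 * ‖x‖ ^ 2 * ‖y‖ ^ 2| ≤
      32 * ε * ‖x‖ ^ 2 * ‖y‖ ^ 2 := by
  obtain ⟨hε0, hε1⟩ := hε
  obtain ⟨h1, h2⟩ := h
  set N := ‖(‖y‖ : ℝ) • x + (‖x‖ : ℝ) • y‖ with hNdef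
  have hN : 0 ≤ N := norm_nonneg _
  have hx : 0 ≤ ‖x‖ := norm_nonneg x
  have hy : 0 ≤ ‖y‖ := norm_nonneg y
  have hs : Real.sqrt 2 ^ 2 = 2 := Real.sq_sqrt (by norm_num)
  have hs0 : 0 ≤ Real.sqrt 2 := Real.sqrt_nonneg 2
  have hd1 : (0:ℝ) < 1 - ε := by linarith
  have hd2 : (0:ℝ) < 1 + ε := by linarith
  have hlo : 0 ≤ Real.sqrt 2 * ((1 - ε) / (1 + ε)) * (‖x‖ * ‖y‖) := by positivity
  have h1' : (Real.sqrt 2 * ((1 - ε) / (1 + ε)) * (‖x‖ * ‖y‖))^2 ≤ N^2 :=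
    pow_le_pow_left₀ hlo h1 2
  have h2' : N^2 ≤ (Real.sqrt 2 * ((1 + ε) / (1 - ε)) * (‖x‖ * ‖y‖))^2 :=
    pow_le_pow_left₀ hN h2 2
  have e1 : (1-ε)^2 > 0 := by positivity
  have e2 : (1+ε)^2 > 0 := by positivity
  rw [mul_pow, mul_pow, div_pow, hs] at h1' h2'
  rw [abs_le]
  have h1'' : 2 * ((1-ε)^2) * (‖x‖*‖y‖)^2 ≤ N^2 * (1+ε)^2 := by
    rw [show 2 * ((1-ε)^2/(1+ε)^2) * (‖x‖*‖y‖)^2 = 2 * ((1-ε)^2) * (‖x‖*‖y‖)^2 / (1+ε)^2 by ring,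
      div_le_iff₀ e2] at h1'
    linarith
  have h2'' : N^2 * (1-ε)^2 ≤ 2 * ((1+ε)^2) * (‖x‖*‖y‖)^2 := by
    rw [show 2 * ((1+ε)^2/(1-ε)^2) * (‖x‖*‖y‖)^2 = 2 * ((1+ε)^2) * (‖x‖*‖y‖)^2 / (1-ε)^2 by ring,
      le_div_iff₀ e1] at h2'
    linarith
  constructor
  · nlinarith [sq_nonneg (‖x‖*‖y‖), sq_nonneg ε, mul_nonneg (mul_nonneg hε0 hε0) (sq_nonneg (‖x‖*‖y‖))]
  · nlinarith [sq_nonneg (‖x‖*‖y‖), sq_nonneg N, mul_nonneg (mul_nonneg hε0 hε0) (sq_nonneg N), mul_nonneg (mul_nonneg hε0 hε0) (sq_nonneg (‖x‖*‖y‖))]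
end

section
/- Let H be a real inner product space, ε ∈ [0, 1), and x, y ∈ H. Then x ⊥ε_W y if and only if |⟨x, y⟩| ≤ ε‖x‖‖y‖. -/
open RealInnerProductSpace

theorem norm_smul_add_smul_sq_sub {H : Type*} [NormedAddCommGroup H] [InnerProductSpace ℝ H]
    (x y : H) :
    ‖(‖y‖ : ℝ) • x + (‖x‖ : ℝ) • y‖ ^ 2 - 2 * ‖x‖ ^ 2 * ‖y‖ ^ 2 = 2 * (‖x‖ * ‖y‖) * ⟪x, y⟫ := by
  rw [norm_add_sq_real, real_inner_smul_left, real_inner_smul_right, norm_smul, norm_smul,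
    Real.norm_of_nonneg (norm_nonneg _), Real.norm_of_nonneg (norm_nonneg _)]
  ring

theorem stmt_8_general {H : Type*} [NormedAddCommGroup H] [InnerProductSpace ℝ H]
    (ε : ℝ) (x y : H) :
    |‖(‖y‖ : ℝ) • x + (‖x‖ : ℝ) • y‖ ^ 2 - 2 * ‖x‖ ^ 2 * ‖y‖ ^ 2| ≤
        2 * ε * ‖x‖ ^ 2 * ‖y‖ ^ 2 ↔
      |⟪x, y⟫| ≤ ε * ‖x‖ * ‖y‖ := by
  rcases eq_or_ne x 0 with rfl | hx
  · simp
  rcases eq_or_ne y 0 with rfl | hy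
  · simp
  have hxy : 0 < 2 * (‖x‖ * ‖y‖) := by positivity
  rw [norm_smul_add_smul_sq_sub, abs_mul, abs_of_pos hxy,
    show 2 * ε * ‖x‖ ^ 2 * ‖y‖ ^ 2 = 2 * (‖x‖ * ‖y‖) * (ε * ‖x‖ * ‖y‖) by ring]
  exact mul_le_mul_iff_right₀ hxy

/-- in a real inner product space, `x ⊥ε_W y` iff `|⟨x,y⟩| ≤ ε‖x‖‖y‖`. -/
theorem stmt_8 {H : Type*} [NormedAddCommGroup H] [InnerProductSpace ℝ H]
    (ε : ℝ) (hε : ε ∈ Set.Ico (0 : ℝ) 1) (x y : H) :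
    |‖(‖y‖ : ℝ) • x + (‖x‖ : ℝ) • y‖ ^ 2 - 2 * ‖x‖ ^ 2 * ‖y‖ ^ 2| ≤
        2 * ε * ‖x‖ ^ 2 * ‖y‖ ^ 2 ↔
      |⟪x, y⟫| ≤ ε * ‖x‖ * ‖y‖ :=
  stmt_8_general ε x y
end

section
/- Let X be a real normed space, ε ∈ [0, 1), and let x, y ∈ X be nonzero. Then x ⊥ε_W y holds if and only if √(2(1−ε)) ≤ ‖x/‖x‖ + y/‖y‖‖ ≤ √(2(1+ε)). -/
/-- for nonzero `x, y`, `x ⊥ε_W y` iff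
`√(2(1−ε)) ≤ ‖x/‖x‖ + y/‖y‖‖ ≤ √(2(1+ε))`. -/
theorem stmt_19 {X : Type*} [NormedAddCommGroup X] [NormedSpace ℝ X]
    (ε : ℝ) (hε : ε ∈ Set.Ico (0 : ℝ) 1) (x y : X) (hx : x ≠ 0) (hy : y ≠ 0) :
    |‖(‖y‖ : ℝ) • x + (‖x‖ : ℝ) • y‖ ^ 2 - 2 * ‖x‖ ^ 2 * ‖y‖ ^ 2| ≤
        2 * ε * ‖x‖ ^ 2 * ‖y‖ ^ 2 ↔
      (Real.sqrt (2 * (1 - ε)) ≤ ‖‖x‖⁻¹ • x + ‖y‖⁻¹ • y‖ ∧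
        ‖‖x‖⁻¹ • x + ‖y‖⁻¹ • y‖ ≤ Real.sqrt (2 * (1 + ε))) := by
  obtain ⟨hε0, hε1⟩ := hε
  have ha : (0:ℝ) < ‖x‖ := norm_pos_iff.2 hx
  have hb : (0:ℝ) < ‖y‖ := norm_pos_iff.2 hy
  set N : ℝ := ‖‖x‖⁻¹ • x + ‖y‖⁻¹ • y‖ with hN
  have hNnn : 0 ≤ N := norm_nonneg _
  have key : (‖y‖ : ℝ) • x + (‖x‖ : ℝ) • y = (‖x‖ * ‖y‖) • (‖x‖⁻¹ • x + ‖y‖⁻¹ • y) := by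
    rw [smul_add, smul_smul, smul_smul]
    congr 2 <;> field_simp <;> ring
  have hnorm : ‖(‖y‖ : ℝ) • x + (‖x‖ : ℝ) • y‖ = ‖x‖ * ‖y‖ * N := by
    rw [key, norm_smul, Real.norm_eq_abs, abs_of_pos (mul_pos ha hb)]
  rw [hnorm]
  have hab : (0:ℝ) < ‖x‖ ^ 2 * ‖y‖ ^ 2 := by positivity
  constructor
  · intro h
    have h' : |N ^ 2 - 2| ≤ 2 * ε := by
      rw [abs_le] at h ⊢
      constructor <;> nlinarith [h.1, h.2]
    rw [abs_le] at h'
    constructor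
    · have : 2 * (1 - ε) ≤ N ^ 2 := by linarith
      calc Real.sqrt (2 * (1 - ε)) ≤ Real.sqrt (N ^ 2) := Real.sqrt_le_sqrt this
        _ = N := Real.sqrt_sq hNnn
    · rw [show N = Real.sqrt (N ^ 2) from (Real.sqrt_sq hNnn).symm]
      exact Real.sqrt_le_sqrt (by linarith)
  · rintro ⟨h1, h2⟩
    have e1 : 2 * (1 - ε) ≤ N ^ 2 := by
      have := Real.sq_sqrt (by linarith : (0:ℝ) ≤ 2 * (1 - ε))
      nlinarith [pow_le_pow_left₀ (Real.sqrt_nonneg (2 * (1 - ε))) h1 2]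
    have e2 : N ^ 2 ≤ 2 * (1 + ε) := by
      have := Real.sq_sqrt (by linarith : (0:ℝ) ≤ 2 * (1 + ε))
      nlinarith [pow_le_pow_left₀ hNnn h2 2]
    rw [abs_le]
    constructor <;> nlinarith
end
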